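/- arXiv:1001.3545 — 2 statements merged into one kernel-verified Lean document; each statement's English description precedes it below -/
import Mathlib

section
/- Let A be a commutative K-algebra with K-basis B = {b_i : i ≥ 1}, and fix C = {b₁,…,bₙ} ⊆ B. Call b ∈ B C-free if b ∉ b_i·B for every b_i ∈ C. Assume: (i) b_i·B ⊆ B for all b_i ∈ C, and (ii) if b₁^{z₁}⋯bₙ^{zₙ}·b = b₁^{z₁'}⋯bₙ^{zₙ'}·b' for nonnegative integers z_i, z_i' and C-free elements b, b' ∈ B, then b = b' and z_i = z_i' for all i; moreover every element of B is of the form b₁^{z₁}⋯bₙ^{zₙ}·b with b C-free. Then: (1) the residue classes of the C-free elements of B form a K-basis of the quotient A/(b₁−1,…,bₙ−1); and (2) the set {b₁^{z₁}⋯bₙ^{zₙ}·b : z_i ∈ ℤ, b ∈ B C-free} is a K-basis of the localization A[b₁^{−1},…,bₙ^{−1}]. -/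
/-- A basis element `b i` is `C`-free (with `C = {b (c 1), …, b (c n)}`) if it does
not lie in `b (c j) · B` for any `j`. -/
def CFree {K A ι : Type*} [Field K] [CommRing A] [Algebra K A] {n : ℕ}
    (b : Module.Basis ι K A) (c : Fin n → ι) (i : ι) : Prop :=
  ∀ (j : Fin n) (i' : ι), b i ≠ b (c j) * b i'

/-!
Hypotheses (i) and (ii) say that `(z, b) ↦ b₁^z₁ ⋯ bₙ^zₙ · b` is a bijection from `ℕⁿ × {C-free}`
onto `B`: `A` is a free `K[X₁, …, Xₙ]`-module on the `C`-free elements, `Xⱼ` acting as `bⱼ`.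
Modulo `bⱼ - 1` every basis element becomes its `C`-free part, and the functional sending each
basis element to its `C`-free part kills that ideal, which gives independence. Inverting the `bⱼ`
replaces `ℕⁿ` by `ℤⁿ`: a finite family of Laurent monomials times `C`-free elements becomes a
family of distinct basis elements of `A` after multiplying by a large enough monomial.
-/

theorem prod_pow_add_single {M σ : Type*} [CommMonoid M] [Fintype σ] [DecidableEq σ]
    (x : σ → M) (z : σ → ℕ) (k : σ) :
    ∏ j, x j ^ (z + Pi.single k 1 : σ → ℕ) j = x k * ∏ j, x j ^ z j := by
  simp only [Pi.add_apply, pow_add, Finset.prod_mul_distrib]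
  simp [Pi.single_apply, mul_comm]

section Localization

variable {A : Type*} [CommRing A] {σ : Type*} [Fintype σ] (x : σ → A)
  (L : Type*) [CommRing L] [Algebra A L] [IsLocalization (Submonoid.closure (Set.range x)) L]

noncomputable def laurentMonomial (ζ : σ → ℤ) : Lˣ :=
  ∏ j, (IsLocalization.map_units (M := Submonoid.closure (Set.range x)) L
    ⟨x j, Submonoid.subset_closure ⟨j, rfl⟩⟩).unit ^ ζ j

theorem laurentMonomial_add (ζ ζ' : σ → ℤ) :
    laurentMonomial x L (ζ + ζ') = laurentMonomial x L ζ * laurentMonomial x L ζ' := by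
  simp only [laurentMonomial, Pi.add_apply, zpow_add, Finset.prod_mul_distrib]

@[simp]
theorem laurentMonomial_zero : laurentMonomial x L 0 = 1 := by
  simp [laurentMonomial]

theorem algebraMap_prod_pow (m : σ → ℕ) :
    algebraMap A L (∏ j, x j ^ m j) = laurentMonomial x L fun j => m j := by
  simp [laurentMonomial, Units.coe_prod]

end Localization

section MonomialBasis

variable {K A F σ : Type*} [CommRing K] [CommRing A] [Algebra K A] [Fintype σ]
  {x : σ → A} {f : F → A} {B : Module.Basis ((σ → ℕ) × F) K A}

theorem mul_basis_eq_basis_add_single [DecidableEq σ]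
    (hB : ∀ p, B p = (∏ j, x j ^ p.1 j) * f p.2) (k : σ) (p : (σ → ℕ) × F) :
    x k * B p = B (p.1 + Pi.single k 1, p.2) := by
  rw [hB, hB, prod_pow_add_single, mul_assoc]

theorem mem_nonZeroDivisors_of_basis_prod_pow_mul
    (hB : ∀ p, B p = (∏ j, x j ^ p.1 j) * f p.2) (k : σ) : x k ∈ nonZeroDivisors A := by
  classical
  have hinj : Function.Injective (LinearMap.mulLeft K (x k)) := by
    refine LinearMap.injective_of_linearIndependent B.span_eq ?_
    have hshift : Function.Injective fun p : (σ → ℕ) × F => (p.1 + Pi.single k 1, p.2) :=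
      fun p q h => by simpa [Prod.ext_iff] using h
    have hcomp : LinearMap.mulLeft K (x k) ∘ B = B ∘ fun p => (p.1 + Pi.single k 1, p.2) :=
      funext (mul_basis_eq_basis_add_single hB k)
    rw [hcomp]
    exact B.linearIndependent.comp _ hshift
  exact mem_nonZeroDivisors_iff_right.mpr fun y hy =>
    hinj (by simpa [mul_comm] using hy)

theorem linearIndependent_mk_span_sub_one (hB : ∀ p, B p = (∏ j, x j ^ p.1 j) * f p.2) :
    LinearIndependent K fun i =>
      Ideal.Quotient.mk (Ideal.span (Set.range fun j => x j - 1)) (f i) := by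
  classical
  set I := Ideal.span (Set.range fun j => x j - 1)
  let φ : A →ₗ[K] F →₀ K := B.constr K fun p => Finsupp.single p.2 1
  have hφ_mul (k : σ) (a : A) : φ (x k * a) = φ a := by
    have : φ ∘ₗ LinearMap.mulLeft K (x k) = φ :=
      B.ext fun p => by simp [φ, mul_basis_eq_basis_add_single hB]
    exact LinearMap.congr_fun this a
  have hφ_I (a : A) (ha : a ∈ I) : φ a = 0 := by
    obtain ⟨r, rfl⟩ := Ideal.mem_span_range_iff_exists_fun.mp ha
    simp [map_sum, mul_sub, mul_comm _ (x _), hφ_mul]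
  have hφf : φ ∘ f = fun i => Finsupp.single i 1 := funext fun i => by
    simpa [φ] using congrArg φ (hB (0, i)).symm
  rw [linearIndependent_iff]
  intro l hl
  have hmem : Finsupp.linearCombination K f l ∈ I := by
    rw [← Ideal.Quotient.eq_zero_iff_mem, ← hl, ← Ideal.Quotient.mkₐ_eq_mk K,
      ← AlgHom.toLinearMap_apply, Finsupp.apply_linearCombination]
    rfl
  have h := hφ_I _ hmem
  rw [Finsupp.apply_linearCombination, hφf] at h
  exact linearIndependent_iff.mp (Finsupp.linearIndependent_single_one K F) l h

theorem span_mk_span_sub_one_eq_top (hB : ∀ p, B p = (∏ j, x j ^ p.1 j) * f p.2) :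
    Submodule.span K (Set.range fun i =>
      Ideal.Quotient.mk (Ideal.span (Set.range fun j => x j - 1)) (f i)) = ⊤ := by
  set I := Ideal.span (Set.range fun j => x j - 1)
  have hx (k : σ) : Ideal.Quotient.mk I (x k) = 1 := by
    rw [← sub_eq_zero, ← map_one (Ideal.Quotient.mk I), ← map_sub,
      Ideal.Quotient.eq_zero_iff_mem]
    exact Ideal.subset_span ⟨k, rfl⟩
  refine eq_top_iff.mpr fun y _ => ?_
  obtain ⟨a, rfl⟩ := Ideal.Quotient.mk_surjective y
  have hB_le : Set.range B ⊆
      (Submodule.span K (Set.range fun i => Ideal.Quotient.mk I (f i))).comap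
        (Ideal.Quotient.mkₐ K I).toLinearMap := by
    rintro _ ⟨p, rfl⟩
    exact Submodule.subset_span ⟨p.2, by simp [hB, hx]⟩
  exact Submodule.span_le.mpr hB_le (B.mem_span a)

theorem exists_basis_quotient_span_sub_one (hB : ∀ p, B p = (∏ j, x j ^ p.1 j) * f p.2) :
    ∃ bas : Module.Basis F K (A ⧸ Ideal.span (Set.range fun j => x j - 1)),
      ∀ i, bas i = Ideal.Quotient.mk _ (f i) :=
  ⟨.mk (linearIndependent_mk_span_sub_one hB) (span_mk_span_sub_one_eq_top hB).ge,
    Module.Basis.mk_apply _ _⟩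

variable (L : Type*) [CommRing L] [Algebra A L] [Algebra K L] [IsScalarTower K A L]
  [IsLocalization (Submonoid.closure (Set.range x)) L]

theorem span_laurentMonomial_mul_eq_top (hB : ∀ p, B p = (∏ j, x j ^ p.1 j) * f p.2) :
    Submodule.span K (Set.range fun p : (σ → ℤ) × F =>
      (laurentMonomial x L p.1 : L) * algebraMap A L (f p.2)) = ⊤ := by
  set W := Submodule.span K (Set.range fun p : (σ → ℤ) × F =>
    (laurentMonomial x L p.1 : L) * algebraMap A L (f p.2))
  have hmem (ζ : σ → ℤ) (a : A) : (laurentMonomial x L ζ : L) * algebraMap A L a ∈ W := by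
    have hB_le : Set.range B ⊆ W.comap (LinearMap.mulLeft K (laurentMonomial x L ζ : L) ∘ₗ
        (IsScalarTower.toAlgHom K A L).toLinearMap) := by
      rintro _ ⟨p, rfl⟩
      refine Submodule.subset_span ⟨(ζ + fun j => (p.1 j : ℤ), p.2), ?_⟩
      simp only [LinearMap.coe_comp, Function.comp_apply, AlgHom.toLinearMap_apply,
        IsScalarTower.coe_toAlgHom', LinearMap.mulLeft_apply, hB, map_mul, algebraMap_prod_pow,
        laurentMonomial_add, Units.val_mul, mul_assoc]
    exact Submodule.span_le.mpr hB_le (B.mem_span a)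
  refine eq_top_iff.mpr fun y _ => ?_
  obtain ⟨⟨a, s⟩, rfl⟩ := IsLocalization.mk'_surjective (Submonoid.closure (Set.range x)) y
  obtain ⟨m, hm⟩ := Submonoid.mem_closure_range_iff_of_fintype.mp s.2
  convert hmem (-fun j => (m j : ℤ)) a using 1
  rw [IsLocalization.mk'_eq_iff_eq_mul, hm, algebraMap_prod_pow, mul_right_comm,
    ← Units.val_mul, ← laurentMonomial_add, neg_add_cancel, laurentMonomial_zero, Units.val_one,
    one_mul]

theorem linearIndependent_laurentMonomial_mul (hB : ∀ p, B p = (∏ j, x j ^ p.1 j) * f p.2) :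
    LinearIndependent K fun p : (σ → ℤ) × F =>
      (laurentMonomial x L p.1 : L) * algebraMap A L (f p.2) := by
  have hinj : Function.Injective (algebraMap A L) :=
    IsLocalization.injective L (Submonoid.closure_le.mpr <| Set.range_subset_iff.mpr
      (mem_nonZeroDivisors_of_basis_prod_pow_mul hB))
  rw [linearIndependent_iff_finset_linearIndependent]
  intro s
  set N : σ → ℕ := fun j => s.sup fun p => (p.1 j).natAbs
  have hN (p) (hp : p ∈ s) (j : σ) : 0 ≤ p.1 j + N j := by
    have : (p.1 j).natAbs ≤ N j := Finset.le_sup (f := fun p => (p.1 j).natAbs) hp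
    omega
  have hshift (p) (hp : p ∈ s) :
      (fun j => ((p.1 j + N j).toNat : ℤ)) = (fun j => (N j : ℤ)) + p.1 :=
    funext fun j => by simp [Int.toNat_of_nonneg (hN p hp j), add_comm]
  let g : s → (σ → ℕ) × F := fun p => (fun j => (p.1.1 j + N j).toNat, p.1.2)
  have hg : Function.Injective g := by
    rintro ⟨p, hp⟩ ⟨q, hq⟩ h
    simp only [g, Prod.mk.injEq] at h
    have h1 := congrArg (fun m : σ → ℕ => fun j => (m j : ℤ)) h.1
    simp only [hshift p hp, hshift q hq, add_right_inj] at h1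
    exact Subtype.ext (Prod.ext h1 h.2)
  let Φ : A →ₗ[K] L := LinearMap.mulLeft K (laurentMonomial x L (-fun j => (N j : ℤ)) : L) ∘ₗ
    (IsScalarTower.toAlgHom K A L).toLinearMap
  have hΦ : Function.Injective Φ := (Units.isUnit _).mul_right_injective.comp hinj
  have hcomp : (fun p : (σ → ℤ) × F => (laurentMonomial x L p.1 : L) * algebraMap A L (f p.2)) ∘
      Subtype.val = Φ ∘ B ∘ g := by
    funext ⟨p, hp⟩
    simp only [Function.comp_apply, Φ, g, LinearMap.coe_comp, AlgHom.toLinearMap_apply,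
      IsScalarTower.coe_toAlgHom', LinearMap.mulLeft_apply, hB, map_mul, algebraMap_prod_pow,
      hshift p hp, laurentMonomial_add, Units.val_mul]
    rw [← mul_assoc, ← mul_assoc, ← Units.val_mul, ← laurentMonomial_add, neg_add_cancel,
      laurentMonomial_zero, Units.val_one, one_mul]
  rw [hcomp]
  exact (B.linearIndependent.comp g hg).map' Φ (LinearMap.ker_eq_bot.mpr hΦ)

theorem exists_basis_localization_zpow_mul (hB : ∀ p, B p = (∏ j, x j ^ p.1 j) * f p.2) :
    ∃ bas : Module.Basis ((σ → ℤ) × F) K L, ∀ p, bas p =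
      (∏ j, (((IsLocalization.map_units (M := Submonoid.closure (Set.range x)) L
        ⟨x j, Submonoid.subset_closure ⟨j, rfl⟩⟩).unit ^ p.1 j : Lˣ) : L)) *
        algebraMap A L (f p.2) := by
  refine ⟨Module.Basis.mk (linearIndependent_laurentMonomial_mul L hB)
    (span_laurentMonomial_mul_eq_top L hB).ge, fun p => ?_⟩
  simp [laurentMonomial, Units.coe_prod]

end MonomialBasis

def Submonoid.mulMapsToRange {M ι : Type*} [Monoid M] (v : ι → M) : Submonoid M where
  carrier := {a | Set.MapsTo (a * ·) (Set.range v) (Set.range v)}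
  one_mem' := by simp
  mul_mem' ha hb := by simpa [Function.comp_def, mul_assoc] using ha.comp hb

theorem exists_basis_prod_pow_mul_of_cFree {K A ι : Type*} [Field K] [CommRing A] [Algebra K A]
    {n : ℕ} (b : Module.Basis ι K A) (c : Fin n → ι)
    (hmul : ∀ (j : Fin n) (i : ι), ∃ i' : ι, b (c j) * b i = b i')
    (huniq : ∀ (z z' : Fin n → ℕ) (i i' : ι), CFree b c i → CFree b c i' →
      (∏ j : Fin n, b (c j) ^ z j) * b i = (∏ j : Fin n, b (c j) ^ z' j) * b i' →
      i = i' ∧ z = z')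
    (hform : ∀ i : ι, ∃ (z : Fin n → ℕ) (i₀ : ι), CFree b c i₀ ∧
      b i = (∏ j : Fin n, b (c j) ^ z j) * b i₀) :
    ∃ B : Module.Basis ((Fin n → ℕ) × {i : ι // CFree b c i}) K A,
      ∀ p, B p = (∏ j, b (c j) ^ p.1 j) * b p.2 := by
  have hmem (z : Fin n → ℕ) : ∏ j, b (c j) ^ z j ∈ Submonoid.mulMapsToRange b :=
    Submonoid.prod_mem _ fun j _ => Submonoid.pow_mem _
      (by rintro _ ⟨i, rfl⟩; exact (hmul j i).imp fun i' h => h.symm) _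
  have hex (p : (Fin n → ℕ) × {i : ι // CFree b c i}) :
      ∃ i, b i = (∏ j, b (c j) ^ p.1 j) * b p.2 :=
    hmem p.1 ⟨p.2, rfl⟩
  choose e he using hex
  have he_bij : Function.Bijective e := by
    refine ⟨fun p q hpq => ?_, fun i => ?_⟩
    · obtain ⟨h2, h1⟩ := huniq _ _ _ _ p.2.2 q.2.2 (by rw [← he, ← he, hpq])
      exact Prod.ext h1 (Subtype.ext h2)
    · obtain ⟨z, i₀, hi₀, hi⟩ := hform i
      exact ⟨(z, ⟨i₀, hi₀⟩), b.injective ((he _).trans hi.symm)⟩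
  exact ⟨b.reindex (Equiv.ofBijective e he_bij).symm, fun p => by simp [he]⟩

/-- Let `B = {b i}` be a `K`-basis of the commutative `K`-algebra `A` and
`C = {b (c j) : j}`.  Assume: (i) `b (c j) · B ⊆ B`; (ii) factorizations
`∏ b(c j)^{z j} · (C-free element)` are unique, and every element of `B` has this
form.  Then (1) the residue classes of the `C`-free basis elements form a `K`-basis
of the quotient `A/(b(c 1) − 1, …, b(c n) − 1)`; and (2) the elements
`∏ b(c j)^{z j} · b i` with `z : Fin n → ℤ` and `i` `C`-free form a `K`-basis of the
localization of `A` at `b(c 1), …, b(c n)`. -/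
theorem stmt_11 {K A ι : Type*} [Field K] [CommRing A] [Algebra K A] {n : ℕ}
    (b : Module.Basis ι K A) (c : Fin n → ι)
    (hmul : ∀ (j : Fin n) (i : ι), ∃ i' : ι, b (c j) * b i = b i')
    (huniq : ∀ (z z' : Fin n → ℕ) (i i' : ι), CFree b c i → CFree b c i' →
      (∏ j : Fin n, b (c j) ^ z j) * b i = (∏ j : Fin n, b (c j) ^ z' j) * b i' →
      i = i' ∧ z = z')
    (hform : ∀ i : ι, ∃ (z : Fin n → ℕ) (i₀ : ι), CFree b c i₀ ∧
      b i = (∏ j : Fin n, b (c j) ^ z j) * b i₀)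
    (L : Type*) [CommRing L] [Algebra A L] [Algebra K L] [IsScalarTower K A L]
    [IsLocalization (Submonoid.closure (Set.range fun j : Fin n => (b (c j) : A))) L] :
    (∃ bas : Module.Basis {i : ι // CFree b c i} K
        (A ⧸ Ideal.span (Set.range fun j : Fin n => (b (c j) : A) - 1)),
      ∀ i, bas i =
        Ideal.Quotient.mk (Ideal.span (Set.range fun j : Fin n => (b (c j) : A) - 1)) (b i.1)) ∧
    (∃ bas : Module.Basis ((Fin n → ℤ) × {i : ι // CFree b c i}) K L,
      ∀ p, bas p =
        (∏ j : Fin n,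
          (((IsLocalization.map_units (M :=
              Submonoid.closure (Set.range fun j : Fin n => (b (c j) : A))) L
            ⟨b (c j), Submonoid.subset_closure ⟨j, rfl⟩⟩).unit ^ (p.1 j) : Lˣ) : L))
          * algebraMap A L (b p.2.1)) := by
  obtain ⟨B, hB⟩ := exists_basis_prod_pow_mul_of_cFree b c hmul huniq hform
  exact ⟨exists_basis_quotient_span_sub_one hB,
    exists_basis_localization_zpow_mul (f := fun i : {i // CFree b c i} => b i) L hB⟩
end

section
/- Let A be an associative unital algebra over a field, T a left A-module, and F_T = Hom_A(T, −). Say a short exact sequence 0 → Z → Y → X → 0 of A-modules is F_T-exact if 0 → F_T(Z) → F_T(Y) → F_T(X) → 0 is exact. Let 𝒴_T be the class of modules X admitting an exact sequence ⋯ → T₁ → T₀ → X → 0 with all T_i ∈ add(T) such that all the induced short exact sequences 0 → Ker(f_i) → T_i → Im(f_i) → 0 are F_T-exact. Then the functor Hom_A(T, −): 𝒴_T → Mod(End_A(T)^op) is fully faithful; in particular, if X ∈ 𝒴_T is indecomposable then Hom_A(T, X) is an indecomposable End_A(T)^op-module, and if Hom_A(T, X) ≅ Hom_A(T, Y) for X,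 Y ∈ 𝒴_T then X ≅ Y. -/
open CategoryTheory

/-- `M ∈ add T`: `M` is a direct summand of a finite direct sum of copies of `T`. -/
def MemAdd {R : Type*} [Ring R] (T M : ModuleCat R) : Prop :=
  ∃ (m : ℕ) (ι : M ⟶ ModuleCat.of R (Fin m → T)) (π : ModuleCat.of R (Fin m → T) ⟶ M),
    ι ≫ π = 𝟙 M

/-- `X ∈ 𝒴_T`: there is an exact sequence `⋯ → P₁ → P₀ → X → 0` with all `P i` in
`add T` such that all the induced short exact sequences
`0 → Ker fᵢ → Pᵢ → Im fᵢ → 0` are `F_T`-exact, i.e. every map `T → Im fᵢ` lifts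
through `fᵢ` (and every map `T → X` lifts through `p`). -/
def MemYT {R : Type*} [Ring R] (T X : ModuleCat R) : Prop :=
  ∃ (P : ℕ → ModuleCat R) (f : ∀ i, P (i + 1) ⟶ P i) (p : P 0 ⟶ X),
    (∀ i, MemAdd T (P i)) ∧
    Function.Surjective p ∧
    Function.Exact (f 0) p ∧
    (∀ i, Function.Exact (f (i + 1)) (f i)) ∧
    (∀ g : T ⟶ X, ∃ h : T ⟶ P 0, h ≫ p = g) ∧
    (∀ i, ∀ g : T ⟶ P i, (∀ x : T, ∃ y : P (i + 1), f i y = g x) →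
      ∃ h : T ⟶ P (i + 1), h ≫ f i = g)

/-!
Every module in `add T`, and hence every `X ∈ 𝒴_T` (a quotient of `P₀`), is the sum of the
images of the maps `T ⟶ X`; this gives faithfulness. For fullness, an `End(T)`-linear map
`F : Hom(T, Tᵐ) → Hom(T, Y)` is composition with `∑ᵢ projᵢ ≫ F (singleᵢ)`, and this passes to
direct summands. For `X ∈ 𝒴_T`, the map `g₀ : P₀ ⟶ Y` representing `h ↦ F (h ≫ p)` kills the
image of `P₁`, since `P₁` is generated by `T` and `f₀ ≫ p = 0`; so it descends to `g : X ⟶ Y`,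
and `F h = h ≫ g` because every `h : T ⟶ X` lifts through `p`. The statements about
indecomposables and isomorphisms then follow formally from full faithfulness.
-/

section

variable {R : Type*} [Ring R] {T : ModuleCat R}

def GeneratedBy (T M : ModuleCat R) : Prop :=
  ⨆ h : T ⟶ M, LinearMap.range h.hom = ⊤

namespace GeneratedBy

variable {M N : ModuleCat R}

theorem hom_ext (hM : GeneratedBy T M) {g₁ g₂ : M ⟶ N}
    (hg : ∀ h : T ⟶ M, h ≫ g₁ = h ≫ g₂) : g₁ = g₂ := by
  ext x
  have hle : ⨆ h : T ⟶ M, LinearMap.range h.hom ≤ LinearMap.eqLocus g₁.hom g₂.hom :=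
    iSup_le fun h => by
      rintro _ ⟨t, rfl⟩
      exact ConcreteCategory.congr_hom (hg h) t
  exact hle (hM ▸ Submodule.mem_top)

theorem of_surjective (hM : GeneratedBy T M) (p : M ⟶ N) (hp : Function.Surjective p) :
    GeneratedBy T N := by
  rw [GeneratedBy, eq_top_iff, ← LinearMap.range_eq_top.mpr hp, LinearMap.range_eq_map, ← hM,
    Submodule.map_iSup]
  exact iSup_le fun h => (LinearMap.range_comp h.hom p.hom).ge.trans
    (le_iSup (fun k : T ⟶ N => LinearMap.range k.hom) (h ≫ p))

theorem exists_ne_zero (hM : GeneratedBy T M) {x : M} (hx : x ≠ 0) :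
    ∃ h : T ⟶ M, h ≠ 0 := by
  by_contra! hzero
  have : 𝟙 M = 0 := hM.hom_ext fun h => by simp [hzero h]
  exact hx (by simpa using ConcreteCategory.congr_hom this x)

end GeneratedBy

theorem generatedBy_pi (ι : Type) [Finite ι] [DecidableEq ι] :
    GeneratedBy T (ModuleCat.of R (ι → T)) := by
  rw [GeneratedBy, eq_top_iff, ← LinearMap.iSup_range_single]
  exact iSup_le fun i =>
    le_iSup_of_le (ModuleCat.ofHom (LinearMap.single R (fun _ => T) i)) le_rfl

theorem MemAdd.generatedBy {P : ModuleCat R} (hP : MemAdd T P) : GeneratedBy T P := by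
  obtain ⟨m, ι, π, hιπ⟩ := hP
  exact (generatedBy_pi (Fin m)).of_surjective π fun x =>
    ⟨ι x, by simpa using ConcreteCategory.congr_hom hιπ x⟩

theorem MemYT.generatedBy {X : ModuleCat R} (hX : MemYT T X) : GeneratedBy T X := by
  obtain ⟨P, -, p, hadd, hp, -⟩ := hX
  exact (hadd 0).generatedBy.of_surjective p hp

theorem sum_proj_comp_single (ι : Type) [Fintype ι] [DecidableEq ι] :
    ∑ i, ModuleCat.ofHom (LinearMap.proj (φ := fun _ : ι => T) i) ≫
      ModuleCat.ofHom (LinearMap.single R (fun _ => T) i) = 𝟙 (ModuleCat.of R (ι → T)) := by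
  ext x
  simp

theorem exists_comp_eq_of_pi {ι : Type} [Fintype ι] [DecidableEq ι] {Y : ModuleCat R}
    (F : (T ⟶ ModuleCat.of R (ι → T)) →+ (T ⟶ Y))
    (hF : ∀ (e : T ⟶ T) (h : T ⟶ ModuleCat.of R (ι → T)), F (e ≫ h) = e ≫ F h) :
    ∃ g : ModuleCat.of R (ι → T) ⟶ Y, ∀ h, F h = h ≫ g := by
  refine ⟨∑ i, ModuleCat.ofHom (LinearMap.proj (φ := fun _ : ι => T) i) ≫
      F (ModuleCat.ofHom (LinearMap.single R (fun _ => T) i)), fun h => ?_⟩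
  conv_lhs => rw [← Category.comp_id h, ← sum_proj_comp_single]
  simp only [Preadditive.comp_sum, map_sum, ← Category.assoc, hF]

theorem MemAdd.exists_comp_eq {P Y : ModuleCat R} (hP : MemAdd T P) (F : (T ⟶ P) →+ (T ⟶ Y))
    (hF : ∀ (e : T ⟶ T) (h : T ⟶ P), F (e ≫ h) = e ≫ F h) :
    ∃ g : P ⟶ Y, ∀ h, F h = h ≫ g := by
  obtain ⟨m, ι, π, hιπ⟩ := hP
  obtain ⟨s, hs⟩ := exists_comp_eq_of_pi (F.comp (Preadditive.rightComp T π))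
    fun e h => by simp [Preadditive.rightComp, hF]
  refine ⟨ι ≫ s, fun h => ?_⟩
  simpa [Preadditive.rightComp, hιπ] using hs (h ≫ ι)

theorem exists_comp_eq_of_exact {M N P Y : ModuleCat R} {f : M ⟶ N} {p : N ⟶ P}
    (hfp : Function.Exact f p) (hp : Function.Surjective p) {g₀ : N ⟶ Y} (hg₀ : f ≫ g₀ = 0) :
    ∃ g : P ⟶ Y, p ≫ g = g₀ := by
  have hle : LinearMap.range f.hom ≤ LinearMap.ker g₀.hom := by
    rintro _ ⟨x, rfl⟩
    exact ConcreteCategory.congr_hom hg₀ x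
  refine ⟨ModuleCat.ofHom ((LinearMap.range f.hom).liftQ g₀.hom hle ∘ₗ
    (hfp.linearEquivOfSurjective hp).symm.toLinearMap), ?_⟩
  ext y
  simp

theorem MemYT.exists_comp_eq {X Y : ModuleCat R} (hX : MemYT T X) (F : (T ⟶ X) →+ (T ⟶ Y))
    (hF : ∀ (e : T ⟶ T) (h : T ⟶ X), F (e ≫ h) = e ≫ F h) :
    ∃ g : X ⟶ Y, ∀ h, F h = h ≫ g := by
  obtain ⟨P, f, p, hadd, hp, hfp, -, hlift, -⟩ := hX
  obtain ⟨g₀, hg₀⟩ := (hadd 0).exists_comp_eq (F.comp (Preadditive.rightComp T p))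
    fun e h => by simp [Preadditive.rightComp, hF]
  have hfg₀ : f 0 ≫ g₀ = 0 := (hadd 1).generatedBy.hom_ext fun h => by
    have hfp0 : f 0 ≫ p = 0 := ModuleCat.hom_ext (LinearMap.ext hfp.apply_apply_eq_zero)
    simpa [Preadditive.rightComp, hfp0] using (hg₀ (h ≫ f 0)).symm
  obtain ⟨g, hg⟩ := exists_comp_eq_of_exact hfp hp hfg₀
  refine ⟨g, fun h => ?_⟩
  obtain ⟨h', rfl⟩ := hlift h
  simpa [Preadditive.rightComp, hg] using hg₀ h'

theorem MemYT.eq_zero_or_eq_id_of_comp_self {X : ModuleCat R} (hX : MemYT T X)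
    (hX_idem : ∀ e : X ⟶ X, e ≫ e = e → e = 0 ∨ e = 𝟙 X) (E : (T ⟶ X) →+ (T ⟶ X))
    (hE : ∀ (e : T ⟶ T) (h : T ⟶ X), E (e ≫ h) = e ≫ E h) (hEE : E.comp E = E) :
    E = 0 ∨ E = AddMonoidHom.id (T ⟶ X) := by
  obtain ⟨g, hg⟩ := hX.exists_comp_eq E hE
  have hgg : g ≫ g = g := hX.generatedBy.hom_ext fun h => by
    rw [← Category.assoc, ← hg, ← hg, ← AddMonoidHom.comp_apply, hEE]
  rcases hX_idem g hgg with rfl | rfl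
  · exact Or.inl (AddMonoidHom.ext fun h => by simp [hg])
  · exact Or.inr (AddMonoidHom.ext fun h => by simp [hg])

theorem MemYT.nonempty_iso {X Y : ModuleCat R} (hX : MemYT T X) (hY : MemYT T Y)
    (Ψ : (T ⟶ X) ≃+ (T ⟶ Y)) (hΨ : ∀ (e : T ⟶ T) (h : T ⟶ X), Ψ (e ≫ h) = e ≫ Ψ h) :
    Nonempty (X ≅ Y) := by
  have hΨ_symm (e : T ⟶ T) (h : T ⟶ Y) : Ψ.symm (e ≫ h) = e ≫ Ψ.symm h :=
    Ψ.injective (by rw [hΨ, Ψ.apply_symm_apply, Ψ.apply_symm_apply])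
  obtain ⟨g, hg⟩ := hX.exists_comp_eq Ψ.toAddMonoidHom hΨ
  obtain ⟨g', hg'⟩ := hY.exists_comp_eq Ψ.symm.toAddMonoidHom hΨ_symm
  refine ⟨⟨g, g', hX.generatedBy.hom_ext fun h => ?_,
    hY.generatedBy.hom_ext fun h => ?_⟩⟩
  · rw [Category.comp_id, ← Category.assoc, ← hg, ← hg']
    exact Ψ.symm_apply_apply h
  · rw [Category.comp_id, ← Category.assoc, ← hg', ← hg]
    exact Ψ.apply_symm_apply h

end

/-- The functor `Hom_A(T, −) : 𝒴_T → Mod (End_A(T)^op)` is fully faithful: for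
`X, Y ∈ 𝒴_T`, composition `g ↦ (h ↦ h ≫ g)` is injective on `Hom(X, Y)` and every
additive `End_A(T)^op`-equivariant map `Hom(T,X) → Hom(T,Y)` is of this form.  In
particular, if `X ∈ 𝒴_T` is indecomposable then `Hom_A(T, X)` is an indecomposable
`End_A(T)^op`-module, and if `Hom_A(T,X) ≅ Hom_A(T,Y)` as `End_A(T)^op`-modules for
`X, Y ∈ 𝒴_T` then `X ≅ Y`. -/
theorem stmt_19 {R : Type*} [Ring R] (T X Y : ModuleCat R)
    (hX : MemYT T X) (hY : MemYT T Y) :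
    (Function.Injective fun (g : X ⟶ Y) => fun (h : T ⟶ X) => h ≫ g) ∧
    (∀ F : (T ⟶ X) →+ (T ⟶ Y),
      (∀ (e : T ⟶ T) (h : T ⟶ X), F (e ≫ h) = e ≫ F h) →
      ∃ g : X ⟶ Y, ∀ h : T ⟶ X, F h = h ≫ g) ∧
    (((∃ x : X, x ≠ 0) ∧ ∀ e : X ⟶ X, e ≫ e = e → e = 0 ∨ e = 𝟙 X) →
      ((∃ h : T ⟶ X, h ≠ 0) ∧
        ∀ E : (T ⟶ X) →+ (T ⟶ X),
          (∀ (e : T ⟶ T) (h : T ⟶ X), E (e ≫ h) = e ≫ E h) →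
          E.comp E = E → E = 0 ∨ E = AddMonoidHom.id (T ⟶ X))) ∧
    (∀ Ψ : (T ⟶ X) ≃+ (T ⟶ Y),
      (∀ (e : T ⟶ T) (h : T ⟶ X), Ψ (e ≫ h) = e ≫ Ψ h) →
      Nonempty (X ≅ Y)) :=
  ⟨fun _ _ hg => hX.generatedBy.hom_ext (congrFun hg),
    hX.exists_comp_eq,
    fun ⟨⟨_, hx⟩, hX_idem⟩ =>
      ⟨hX.generatedBy.exists_ne_zero hx, hX.eq_zero_or_eq_id_of_comp_self hX_idem⟩,
    hX.nonempty_iso hY⟩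
end
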